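/- For all n ≥ 0, the Daehee numbers of the second kind satisfy Ď_n = ∑_{l=0}^{n} s(n,l) (-1)^l B_l, where s(n,l) are the signed Stirling numbers of the first kind and B_l are the Bernoulli numbers. -/

import Mathlib

open PowerSeries Finset

noncomputable def logOneAdd : PowerSeries ℚ :=
  PowerSeries.mk fun k => if k = 0 then 0 else (-1 : ℚ)^(k+1) / k

noncomputable def onePow (x : ℚ) : PowerSeries ℚ :=
  PowerSeries.mk fun k => (∏ i ∈ Finset.range k, (x - (i : ℚ))) / (Nat.factorial k : ℚ)

noncomputable def expX (x : ℚ) : PowerSeries ℚ :=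
  PowerSeries.mk fun k => x ^ k / (Nat.factorial k : ℚ)

/-! Substituting `t ↦ log (1 + t)` into an exponential generating function `∑ aₗ tˡ / l!` gives
`∑ₙ (∑ₗ s(n,l) aₗ) tⁿ / n!`, because `log (1 + t)ˡ / l! = ∑ₙ s(n,l) tⁿ / n!`: applying `(1 + t) d/dt`
shows that both sides satisfy the recurrence of the coefficients of `x (x - 1) ⋯ (x - n + 1)`.
For `aₗ = (-1)ˡ` this gives `e^{-log (1 + t)} = 1 / (1 + t)`, so substituting `t ↦ -log (1 + t)` into
`B(t) (eᵗ - 1) = t` yields `B(-log (1 + t)) · t = (1 + t) log (1 + t)`, the defining identity of the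
`Ďₙ`. -/

open Nat

theorem descPochhammer_eval_neg_one (R : Type*) [CommRing R] (n : ℕ) :
    (descPochhammer R n).eval (-1) = (-1) ^ n * n ! := by
  have h := ascPochhammer_eval_neg_eq_descPochhammer R (-1) n
  rw [neg_neg, ascPochhammer_eval_one] at h
  rw [h, ← mul_assoc, ← mul_pow, neg_one_mul, neg_neg, one_pow, one_mul]

theorem natDegree_descPochhammer_le (R : Type*) [Ring R] (n : ℕ) :
    (descPochhammer R n).natDegree ≤ n := by
  rw [← descPochhammer_map (algebraMap ℤ R)]
  exact Polynomial.natDegree_map_le.trans (descPochhammer_natDegree ℤ n).le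

theorem Polynomial.coeff_eq_of_forall_eval_eq_sum {R : Type*} [CommRing R] [IsDomain R]
    [Infinite R] {p : Polynomial R} {c : ℕ → R} {N : ℕ} (h : ∀ x, p.eval x = ∑ l ∈ range N, c l * x ^ l)
    {l : ℕ} (hl : l < N) : p.coeff l = c l := by
  have hp : p = ∑ l ∈ range N, C (c l) * X ^ l :=
    funext fun x => by simp [eval_finsetSum, h]
  simp [hp, coeff_X_pow, hl]

namespace PowerSeries

theorem coeff_pow_eq_zero_of_lt {R : Type*} [CommRing R] {b : R⟦X⟧} (hb : constantCoeff b = 0)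
    {n d : ℕ} (h : n < d) : coeff n (b ^ d) = 0 :=
  X_pow_dvd_iff.mp (pow_dvd_pow_of_dvd (X_dvd_iff.mpr hb) d) n h

theorem coeff_subst_eq_sum_range {R S : Type*} [CommRing R] [CommRing S] [Algebra R S]
    {b : S⟦X⟧} (hb : constantCoeff b = 0) (f : R⟦X⟧) (n : ℕ) :
    coeff n (f.subst b) = ∑ d ∈ range (n + 1), coeff d f • coeff n (b ^ d) := by
  rw [coeff_subst' (HasSubst.of_constantCoeff_zero' hb)]
  refine finsum_eq_sum_of_support_subset _ fun d hd => ?_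
  rw [coe_range, Set.mem_Iio, Nat.lt_succ_iff]
  by_contra! h
  exact hd (by simp only [coeff_pow_eq_zero_of_lt hb h, smul_zero])

theorem rescale_neg_one_mk_one_mul_one_add_X {A : Type*} [CommRing A] :
    rescale (-1 : A) (mk 1) * (1 + X) = 1 := by
  simpa [sub_eq_add_neg] using congrArg (rescale (-1 : A)) (mk_one_mul_one_sub_eq_one (S := A))

section LogOneAdd

variable {A : Type*} [CommRing A] [Algebra ℚ A]

theorem deriv_log_eq_rescale_neg_one_mk_one : d⁄dX A (log A) = rescale (-1) (mk 1) := by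
  simp [deriv_log, rescale_mk]

theorem one_add_X_mul_derivative_log_pow (m : ℕ) :
    (1 + X) * d⁄dX A (log A ^ (m + 1)) = (m + 1 : A⟦X⟧) * log A ^ m := by
  rw [Derivation.leibniz_pow, Nat.add_sub_cancel, deriv_log_eq_rescale_neg_one_mk_one, smul_eq_mul,
    nsmul_eq_mul]
  push_cast
  linear_combination ((m + 1 : A⟦X⟧) * log A ^ m) * rescale_neg_one_mk_one_mul_one_add_X (A := A)

theorem factorial_mul_coeff_log_pow (n l : ℕ) :
    (n ! : A) * coeff n (log A ^ l) = l ! * (descPochhammer A n).coeff l := by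
  induction n generalizing l with
  | zero => cases l <;> simp [coeff_zero_eq_constantCoeff, Polynomial.coeff_one]
  | succ n ih =>
    cases l with
    | zero => simp [coeff_one, Polynomial.coeff_zero_eq_eval_zero]
    | succ m =>
      have hrec := congrArg (coeff n) (one_add_X_mul_derivative_log_pow (A := A) m)
      have hX : coeff n (X * d⁄dX A (log A ^ (m + 1))) = n * coeff n (log A ^ (m + 1)) := by
        cases n with
        | zero => simp [coeff_zero_eq_constantCoeff]
        | succ p => rw [coeff_succ_X_mul, coeff_derivative]; push_cast; ring
      rw [add_mul, one_mul, map_add, hX, coeff_derivative,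
        show (m + 1 : A⟦X⟧) = C ((m : A) + 1) by simp, coeff_C_mul] at hrec
      rw [descPochhammer_succ_right, mul_sub, Polynomial.coeff_sub, Polynomial.coeff_mul_X,
        ← Polynomial.C_eq_natCast, Polynomial.coeff_mul_C]
      have ih' := ih (m + 1)
      simp only [factorial_succ] at ih' ⊢
      push_cast at ih' ⊢
      linear_combination (n ! : A) * hrec + ((m : A) + 1) * ih m - (n : A) * ih'

theorem factorial_mul_coeff_subst_log (f : A⟦X⟧) (n : ℕ) :
    (n ! : A) * coeff n (f.subst (log A)) =
      ∑ l ∈ range (n + 1), (descPochhammer A n).coeff l * (l ! * coeff l f) := by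
  rw [coeff_subst_eq_sum_range constantCoeff_log, mul_sum]
  refine sum_congr rfl fun l _ => ?_
  rw [smul_eq_mul, mul_left_comm, factorial_mul_coeff_log_pow]
  ring

theorem subst_log_rescale_neg_one_exp :
    (rescale (-1) (exp A)).subst (log A) = rescale (-1) (mk 1) := by
  ext n
  have hunit : IsUnit (n ! : A) := by
    simpa using (IsUnit.mk0 (n ! : ℚ) (by positivity)).map (algebraMap ℚ A)
  refine hunit.mul_left_cancel ?_
  have hterm : ∀ l ∈ range (n + 1),
      (descPochhammer A n).coeff l * (l ! * coeff l (rescale (-1) (exp A))) =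
        (descPochhammer A n).coeff l * (-1) ^ l := by
    intro l _
    have hl : (l ! : A) * algebraMap ℚ A (1 / l !) = 1 := by
      rw [← map_natCast (algebraMap ℚ A), ← map_mul, mul_one_div_cancel (by positivity), map_one]
    rw [coeff_rescale, coeff_exp]
    linear_combination ((descPochhammer A n).coeff l * (-1) ^ l) * hl
  rw [factorial_mul_coeff_subst_log, sum_congr rfl hterm,
    ← Polynomial.eval_eq_sum_range' (Nat.lt_succ_of_le (natDegree_descPochhammer_le A n)),
    descPochhammer_eval_neg_one, coeff_rescale, coeff_mk, Pi.one_apply, mul_one, mul_comm]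

end LogOneAdd

end PowerSeries

theorem logOneAdd_eq_log : logOneAdd = log ℚ := by
  ext k
  simp [logOneAdd]

theorem daehee2_stirling_bernoulli (Dh B : ℕ → ℚ) (s : ℕ → ℕ → ℚ)
    (hDh : PowerSeries.mk (fun n => Dh n / (Nat.factorial n : ℚ)) * PowerSeries.X = (1 + PowerSeries.X) * logOneAdd) (hB : PowerSeries.mk (fun l => B l / (Nat.factorial l : ℚ)) * (PowerSeries.exp ℚ - 1) = PowerSeries.X) (hs : ∀ (n : ℕ) (x : ℚ), ∏ i ∈ Finset.range n, (x - (i : ℚ)) = ∑ l ∈ Finset.range (n + 1), s n l * x ^ l) :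
    ∀ n : ℕ, Dh n = ∑ l ∈ Finset.range (n + 1), s n l * (-1 : ℚ) ^ l * B l := by
  intro n
  set bernoulliEGF := mk fun l => B l / (l ! : ℚ)
  have hsubst : (rescale (-1) bernoulliEGF).subst (log ℚ) * (rescale (-1) (mk 1) - 1) =
      -log ℚ := by
    have h := congrArg (substAlgHom (HasSubst.log (A := ℚ)) ∘ rescale (-1 : ℚ)) hB
    simp only [Function.comp_apply, map_mul, map_sub, map_one, map_neg, rescale_neg_one_X,
      substAlgHom_X] at h
    simpa only [coe_substAlgHom, subst_log_rescale_neg_one_exp] using h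
  have hdaehee : mk (fun n => Dh n / n !) = (rescale (-1) bernoulliEGF).subst (log ℚ) := by
    refine mul_X_cancel ?_
    rw [hDh, logOneAdd_eq_log]
    linear_combination (1 + X) * hsubst -
      (rescale (-1) bernoulliEGF).subst (log ℚ) * rescale_neg_one_mk_one_mul_one_add_X (A := ℚ)
  have hcoeff := factorial_mul_coeff_subst_log (rescale (-1) bernoulliEGF) n
  rw [← hdaehee, coeff_mk, mul_div_cancel₀ _ (by positivity)] at hcoeff
  rw [hcoeff]
  have hstirling : ∀ x, (descPochhammer ℚ n).eval x = ∑ l ∈ range (n + 1), s n l * x ^ l := by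
    simpa [descPochhammer_eval_eq_prod_range] using hs n
  refine sum_congr rfl fun l hl => ?_
  rw [Polynomial.coeff_eq_of_forall_eval_eq_sum hstirling (mem_range.mp hl), coeff_rescale, coeff_mk]
  field_simp
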